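/- arXiv:2006.07265 — 2 statements merged into one kernel-verified Lean document; each statement's English description precedes it below -/
import Mathlib

section
/- Let n ≥ 2 and z0, z1 ≥ 1 be integers with z0 + z1 ≤ n, and let Q be the associated voter-model rate matrix on S = {z1, …, n−z0}. Define μ_{z1} = 1 and μ_k = ∏_{j=z1}^{k−1} q_{j,j+1}/q_{j+1,j} for k ∈ S, and let π_k = μ_k / (∑_{l∈S} μ_l). Then the expected number of opinion-1 holders at equilibrium satisfies ∑_{k∈S} k·π_k = n·z1/(z0+z1). -/
/-!
The weights `μ` satisfy detailed balance, `μ_j q_{j,j+1} = μ_{j+1} q_{j+1,j}`, and the boundary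
rates `q_{z1,z1-1}` and `q_{n-z0,n-z0+1}` vanish, so summing the balance equations over `S` gives
`∑_k μ_k (q_{k,k+1} - q_{k,k-1}) = 0`: the drift has mean zero at equilibrium. For the voter model
the drift `(n z1 - k (z0 + z1)) / (n - 1)` is affine in `k`, so this is exactly the claimed mean.
-/

/-- Upward transition rate `q_{k,k+1} = k (n - k - z0) / (n - 1)` of the voter model
with `z0` zealots of opinion 0 and `z1` zealots of opinion 1 on the complete graph
with `n` nodes. -/
noncomputable def qup (n z0 : ℕ) (k : ℕ) : ℝ :=
  (k : ℝ) * ((n : ℝ) - (k : ℝ) - (z0 : ℝ)) / ((n : ℝ) - 1)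

/-- Downward transition rate `q_{k,k-1} = (k - z1) (n - k) / (n - 1)`. -/
noncomputable def qdown (n z1 : ℕ) (k : ℕ) : ℝ :=
  ((k : ℝ) - (z1 : ℝ)) * ((n : ℝ) - (k : ℝ)) / ((n : ℝ) - 1)

/-- `μ_k = ∏_{j=z1}^{k-1} q_{j,j+1} / q_{j+1,j}`, with `μ_{z1} = 1` (empty product). -/
noncomputable def mu (n z0 z1 : ℕ) (k : ℕ) : ℝ :=
  ∏ j ∈ Finset.Ico z1 k, qup n z0 j / qdown n z1 (j + 1)

/-- The stationary distribution `π_k = μ_k / ∑_{l ∈ S} μ_l` on `S = {z1, …, n - z0}`. -/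
noncomputable def statPi (n z0 z1 : ℕ) (k : ℕ) : ℝ :=
  mu n z0 z1 k / ∑ l ∈ Finset.Icc z1 (n - z0), mu n z0 z1 l

open Finset

theorem Finset.sum_Icc_eq_sum_Icc_of_shift {M : Type*} [AddCommMonoid M] {a b : ℕ}
    (hab : a ≤ b) {f g : ℕ → M} (hshift : ∀ j ∈ Ico a b, f j = g (j + 1))
    (hfb : f b = 0) (hga : g a = 0) :
    ∑ k ∈ Icc a b, f k = ∑ k ∈ Icc a b, g k :=
  calc ∑ k ∈ Icc a b, f k = ∑ k ∈ Ico a b, f k := by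
        rw [Icc_eq_cons_Ico hab, sum_cons, hfb, zero_add]
    _ = ∑ k ∈ Ico a b, g (k + 1) := sum_congr rfl hshift
    _ = ∑ k ∈ Ioc a b, g k := by rw [sum_Ico_add', Ico_add_one_add_one_eq_Ioc]
    _ = ∑ k ∈ Icc a b, g k := by rw [Icc_eq_cons_Ioc hab, sum_cons, hga, zero_add]

section VoterModel

variable {n z0 z1 : ℕ}

theorem qup_nonneg {j : ℕ} (hj : j + z0 < n) : 0 ≤ qup n z0 j := by
  have hjn : (j : ℝ) + z0 < n := by exact_mod_cast hj
  have hn : (1 : ℝ) ≤ n := by exact_mod_cast (show 1 ≤ n by omega)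
  unfold qup
  apply div_nonneg (mul_nonneg (Nat.cast_nonneg j) _) <;> linarith

theorem qdown_pos {k : ℕ} (hk1 : z1 < k) (hk2 : k < n) : 0 < qdown n z1 k := by
  have h1 : (z1 : ℝ) < k := by exact_mod_cast hk1
  have h2 : (k : ℝ) < n := by exact_mod_cast hk2
  have hn : (2 : ℝ) ≤ n := by exact_mod_cast (show 2 ≤ n by omega)
  unfold qdown
  apply div_pos (mul_pos _ _) <;> linarith

theorem qup_sub_qdown (k : ℕ) :
    qup n z0 k - qdown n z1 k = ((n : ℝ) * z1 - k * (z0 + z1)) / (n - 1) := by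
  rw [qup, qdown, ← sub_div]
  ring

theorem mu_self : mu n z0 z1 z1 = 1 := by
  simp [mu]

theorem mu_succ {j : ℕ} (hj : z1 ≤ j) :
    mu n z0 z1 (j + 1) = mu n z0 z1 j * (qup n z0 j / qdown n z1 (j + 1)) :=
  prod_Ico_succ_top hj _

theorem mu_nonneg (hz0 : 1 ≤ z0) {k : ℕ} (hk : k ≤ n - z0) : 0 ≤ mu n z0 z1 k := by
  refine prod_nonneg fun j hj => ?_
  rw [mem_Ico] at hj
  exact div_nonneg (qup_nonneg (by omega)) (qdown_pos (by omega) (by omega)).le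

theorem mu_mul_qup_eq_mu_succ_mul_qdown {j : ℕ} (hj1 : z1 ≤ j) (hj2 : j + 1 < n) :
    mu n z0 z1 j * qup n z0 j = mu n z0 z1 (j + 1) * qdown n z1 (j + 1) := by
  rw [mu_succ hj1, mul_assoc, div_mul_cancel₀ _ (qdown_pos (by omega) hj2).ne']

theorem sum_mu_mul_qup_eq_sum_mu_mul_qdown (hz0 : 1 ≤ z0) (hsum : z0 + z1 ≤ n) :
    ∑ k ∈ Icc z1 (n - z0), mu n z0 z1 k * qup n z0 k
      = ∑ k ∈ Icc z1 (n - z0), mu n z0 z1 k * qdown n z1 k := by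
  refine sum_Icc_eq_sum_Icc_of_shift (by omega) (fun j hj => ?_) ?_ ?_
  · rw [mem_Ico] at hj
    exact mu_mul_qup_eq_mu_succ_mul_qdown hj.1 (by omega)
  · simp [qup, Nat.cast_sub (show z0 ≤ n by omega)]
  · simp [qdown]

theorem sum_cast_mul_mu (hn : 2 ≤ n) (hz0 : 1 ≤ z0) (hsum : z0 + z1 ≤ n) :
    ((z0 : ℝ) + z1) * ∑ k ∈ Icc z1 (n - z0), (k : ℝ) * mu n z0 z1 k
      = n * z1 * ∑ k ∈ Icc z1 (n - z0), mu n z0 z1 k := by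
  have hn1 : (n : ℝ) - 1 ≠ 0 := by
    have : (2 : ℝ) ≤ n := by exact_mod_cast hn
    linarith
  have hdrift : ∑ k ∈ Icc z1 (n - z0), mu n z0 z1 k * (qup n z0 k - qdown n z1 k) = 0 := by
    rw [← sub_eq_zero.mpr (sum_mu_mul_qup_eq_sum_mu_mul_qdown hz0 hsum), ← sum_sub_distrib]
    simp only [mul_sub]
  simp only [qup_sub_qdown, mul_div_assoc', ← sum_div, div_eq_zero_iff, hn1, or_false] at hdrift
  symm
  rw [mul_sum, mul_sum, ← sub_eq_zero, ← sum_sub_distrib, ← hdrift]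
  exact sum_congr rfl fun k _ => by ring

end VoterModel

theorem expected_opinion_one_at_equilibrium_general (n z0 z1 : ℕ) (hn : 2 ≤ n)
    (hz0 : 1 ≤ z0) (hsum : z0 + z1 ≤ n) :
    ∑ k ∈ Finset.Icc z1 (n - z0), (k : ℝ) * statPi n z0 z1 k
      = (n : ℝ) * (z1 : ℝ) / ((z0 : ℝ) + (z1 : ℝ)) := by
  have hz1S : z1 ∈ Icc z1 (n - z0) := mem_Icc.mpr ⟨le_rfl, by omega⟩
  have hT : 0 < ∑ l ∈ Icc z1 (n - z0), mu n z0 z1 l :=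
    calc (0 : ℝ) < mu n z0 z1 z1 := by rw [mu_self]; exact one_pos
      _ ≤ _ := single_le_sum (fun k hk => mu_nonneg hz0 (mem_Icc.mp hk).2) hz1S
  have hz : (0 : ℝ) < z0 + z1 := by positivity
  simp only [statPi, mul_div_assoc', ← sum_div]
  rw [div_eq_div_iff hT.ne' hz.ne']
  linarith [sum_cast_mul_mu hn hz0 hsum]

/-- The expected number of opinion-1 holders at equilibrium is `n z1 / (z0 + z1)`. -/
theorem expected_opinion_one_at_equilibrium (n z0 z1 : ℕ) (hn : 2 ≤ n)
    (hz0 : 1 ≤ z0) (hz1 : 1 ≤ z1) (hsum : z0 + z1 ≤ n) :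
    ∑ k ∈ Finset.Icc z1 (n - z0), (k : ℝ) * statPi n z0 z1 k
      = (n : ℝ) * (z1 : ℝ) / ((z0 : ℝ) + (z1 : ℝ)) :=
  expected_opinion_one_at_equilibrium_general n z0 z1 hn hz0 hsum
end

section
/- Let α > 0, z0 > 0 and 0 < λ < 1 be real numbers with D = 1 − λ − α·λ·z0 ≤ 0, and define g : (0,∞) → ℝ by g(x) = x/((1 + α·x)·z0 + x). Then g(x) < λ for all x > 0, the function x ↦ (g(x) − λ)² is strictly positive and strictly decreasing on (0,∞), and if moreover D = 0 then (g(x) − λ)² tends to 0 as x → ∞. In particular, when D ≤ 0 the target heterogeneity λ can be approached but never reached by adding zealots of opinion 1. -/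
/-- Under the backfire effect with rate `α > 0`, `z0 > 0` zealots of opinion 0 and
target heterogeneity `λ ∈ (0,1)`, if `D = 1 - λ - αλz0 ≤ 0` then the equilibrium
average opinion `g x = x / ((1 + α x) z0 + x)` stays strictly below `λ` for all
`x > 0`, the function `x ↦ (g x - λ)²` is strictly positive and strictly decreasing
on `(0, ∞)`, and if moreover `D = 0` it tends to `0` as `x → ∞`: the target can be
approached but never reached. -/
theorem backfire_target_unreachable (α z0 lam : ℝ)
    (hα : 0 < α) (hz0 : 0 < z0) (hlam0 : 0 < lam) (hlam1 : lam < 1)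
    (hD : 1 - lam - α * lam * z0 ≤ 0) :
    (∀ x : ℝ, 0 < x → x / ((1 + α * x) * z0 + x) < lam) ∧
    (∀ x : ℝ, 0 < x → 0 < (x / ((1 + α * x) * z0 + x) - lam) ^ 2) ∧
    StrictAntiOn (fun x : ℝ => (x / ((1 + α * x) * z0 + x) - lam) ^ 2) (Set.Ioi 0) ∧
    (1 - lam - α * lam * z0 = 0 →
      Filter.Tendsto (fun x : ℝ => (x / ((1 + α * x) * z0 + x) - lam) ^ 2)
        Filter.atTop (nhds 0)) := by
  have hden : ∀ x : ℝ, 0 < x → 0 < (1 + α * x) * z0 + x := by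
    intro x hx; nlinarith
  have hlt : ∀ x : ℝ, 0 < x → x / ((1 + α * x) * z0 + x) < lam := by
    intro x hx
    rw [div_lt_iff₀ (hden x hx)]
    nlinarith
  have hmono : ∀ a b : ℝ, 0 < a → a < b →
      a / ((1 + α * a) * z0 + a) < b / ((1 + α * b) * z0 + b) := by
    intro a b ha hab
    have hb : 0 < b := ha.trans hab
    rw [div_lt_div_iff₀ (hden a ha) (hden b hb)]
    nlinarith
  refine ⟨hlt, ?_, ?_, ?_⟩
  · intro x hx
    have h := hlt x hx
    have hne : x / ((1 + α * x) * z0 + x) - lam ≠ 0 := sub_ne_zero.mpr (ne_of_lt h)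
    exact pow_pos (abs_pos.mpr hne) 2 |>.trans_eq (sq_abs _)
  · intro a ha b hb hab
    simp only [Set.mem_Ioi] at ha hb
    have h1 := hlt a ha
    have h2 := hlt b hb
    have h3 := hmono a b ha hab
    simp only
    nlinarith
  · intro hD0
    set c : ℝ := 1 + α * z0 with hc
    have hcpos : 0 < c := by positivity
    have hlamc : lam = 1 / c := by
      field_simp [hc]
      nlinarith
    have h1 : Filter.Tendsto (fun x : ℝ => z0 / x + c) Filter.atTop (nhds c) := by
      have := tendsto_const_div_atTop_nhds_zero_nat z0
      have h := Filter.Tendsto.div_atTop (tendsto_const_nhds (x := z0)) Filter.tendsto_id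
      simpa using h.add (tendsto_const_nhds (x := c))
    have h2 : Filter.Tendsto (fun x : ℝ => (z0 / x + c)⁻¹) Filter.atTop (nhds c⁻¹) :=
      h1.inv₀ (ne_of_gt hcpos)
    have h3 : Filter.Tendsto (fun x : ℝ => x / ((1 + α * x) * z0 + x))
        Filter.atTop (nhds c⁻¹) := by
      refine h2.congr' ?_
      filter_upwards [Filter.eventually_gt_atTop 0] with x hx
      have hd := hden x hx
      have key : z0 / x + c = ((1 + α * x) * z0 + x) / x := by
        field_simp [hc]; ring
      rw [key, inv_div]
    have h4 : Filter.Tendsto (fun x : ℝ => (x / ((1 + α * x) * z0 + x) - lam) ^ 2)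
        Filter.atTop (nhds ((c⁻¹ - lam) ^ 2)) := (h3.sub tendsto_const_nhds).pow 2
    have : (c⁻¹ - lam) ^ 2 = 0 := by
      rw [hlamc]; simp [one_div]
    rwa [this] at h4
end
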